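/- There do not exist equilateral triangles in an AL-monoid: if a*b = b*c = c*a then a = b = c. -/
import Mathlib

/-- An Autometrized lattice ordered monoid (AL-monoid). -/
class ALMonoid (A : Type*) extends Lattice A, AddCommMonoid A where
  amul : A → A → A
  add_le_add_left' : ∀ a b : A, a ≤ b → ∀ c : A, c + a ≤ c + b
  amul_core : ∀ a b : A, amul a (a ⊓ b) + b = a ⊔ b
  add_contract : ∀ a x y : A, amul (a + x) (a + y) ≤ amul x y
  sup_contract : ∀ a x y : A, amul (a ⊔ x) (a ⊔ y) ≤ amul x y
  inf_contract : ∀ a x y : A, amul (a ⊓ x) (a ⊓ y) ≤ amul x y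
  amul_contract : ∀ a x y : A, amul (amul a x) (amul a y) ≤ amul x y
  inf_amul_sup : ∀ a b : A, amul a (a ⊔ b) ⊓ amul b (a ⊔ b) = 0
  amul_nonneg : ∀ a b : A, 0 ≤ amul a b
  amul_eq_zero_iff : ∀ a b : A, amul a b = 0 ↔ a = b
  amul_comm : ∀ a b : A, amul a b = amul b a
  amul_triangle : ∀ a b c : A, amul a b ≤ amul a c + amul c b

open ALMonoid

infixl:70 " ⋆ " => ALMonoid.amul

namespace ALStmt3

variable {A : Type*} [ALMonoid A]

lemma star_self (a : A) : a ⋆ a = 0 := (amul_eq_zero_iff a a).2 rfl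

lemma add_mono {a b c d : A} (h1 : a ≤ b) (h2 : c ≤ d) : a + c ≤ b + d := by
  have e1 : a + c ≤ a + d := add_le_add_left' c d h2 a
  have e2 : d + a ≤ d + b := add_le_add_left' a b h1 d
  calc a + c ≤ a + d := e1
    _ = d + a := add_comm a d
    _ ≤ d + b := e2
    _ = b + d := add_comm d b

lemma le_add_right' {a b : A} (h : 0 ≤ b) : a ≤ a + b := by
  have := add_le_add_left' 0 b h a
  simpa using this

lemma point {a b : A} (h : a ≤ b) : a + a ⋆ b = b := by
  have h2 := amul_core b a
  rw [inf_eq_right.2 h, sup_eq_left.2 h] at h2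
  rw [amul_comm a b, add_comm]
  exact h2

lemma zero_star {a : A} (h : 0 ≤ a) : 0 ⋆ a = a := by
  have := point h
  simpa using this

lemma mono1 {a b c : A} (h1 : a ≤ b) (h2 : b ≤ c) : a ⋆ b ≤ a ⋆ c := by
  have := inf_contract b a c
  rwa [inf_eq_right.2 h1, inf_eq_left.2 h2] at this

lemma mono2 {a b c : A} (h1 : a ≤ b) (h2 : b ≤ c) : b ⋆ c ≤ a ⋆ c := by
  have := sup_contract b a c
  rwa [sup_eq_left.2 h1, sup_eq_right.2 h2] at this

lemma star_add_le {a b : A} (h : 0 ≤ b) : a ⋆ (a + b) ≤ b := by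
  have h2 := add_contract a 0 b
  rwa [add_zero, zero_star h] at h2

/-- `(a ⊓ b) ⋆ b = a ⋆ (a ⊔ b)` -/
lemma inc_eq (a b : A) : (a ⊓ b) ⋆ b = a ⋆ (a ⊔ b) := by
  apply le_antisymm
  · have h := inf_contract b a (a ⊔ b)
    rwa [inf_comm b a, inf_eq_left.2 (le_sup_right : b ≤ a ⊔ b)] at h
  · have h := sup_contract a (a ⊓ b) b
    rwa [sup_eq_left.2 (inf_le_left : a ⊓ b ≤ a)] at h

lemma e_disj (a b : A) : (a ⋆ (a ⊔ b)) ⊓ (b ⋆ (b ⊔ a)) = 0 := by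
  have h := inf_amul_sup a b
  nth_rewrite 2 [sup_comm a b] at h
  exact h

lemma disj_add_eq_sup {a b : A} (h : a ⊓ b = 0) (ha : 0 ≤ a) (hb : 0 ≤ b) :
    a + b = a ⊔ b := by
  have h2 := amul_core a b
  rwa [h, amul_comm a 0, zero_star ha] at h2

lemma disj_star {a b : A} (h : a ⊓ b = 0) (ha : 0 ≤ a) (hb : 0 ≤ b) : a ⋆ b = a + b := by
  apply le_antisymm
  · calc a ⋆ b ≤ a ⋆ 0 + 0 ⋆ b := amul_triangle a b 0
      _ = a + b := by rw [amul_comm a 0, zero_star ha, zero_star hb]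
  · rw [disj_add_eq_sup h ha hb]
    apply sup_le
    · have h2 := inf_contract a a b
      rwa [inf_idem, h, amul_comm a 0, zero_star ha] at h2
    · have h2 := inf_contract b b a
      rwa [inf_idem, inf_comm b a, h, amul_comm b 0, zero_star hb, amul_comm b a] at h2

lemma star_decomp (a b : A) : a ⋆ b = a ⋆ (a ⊔ b) + b ⋆ (b ⊔ a) := by
  apply le_antisymm
  · have ht := amul_triangle a b (a ⊔ b)
    calc a ⋆ b ≤ a ⋆ (a ⊔ b) + (a ⊔ b) ⋆ b := ht
      _ = a ⋆ (a ⊔ b) + b ⋆ (b ⊔ a) := by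
          rw [amul_comm (a ⊔ b) b]
          nth_rewrite 2 [sup_comm a b]
          rfl
  · have h1 : a ⋆ (a ⊔ b) ≤ a ⋆ b := by
      have h := sup_contract a a b
      rwa [sup_idem] at h
    have h2 : b ⋆ (b ⊔ a) ≤ a ⋆ b := by
      have h := sup_contract b b a
      rw [sup_idem] at h
      calc b ⋆ (b ⊔ a) ≤ b ⋆ a := h
        _ = a ⋆ b := amul_comm b a
    calc a ⋆ (a ⊔ b) + b ⋆ (b ⊔ a) = a ⋆ (a ⊔ b) ⊔ b ⋆ (b ⊔ a) :=
          disj_add_eq_sup (e_disj a b) (amul_nonneg _ _) (amul_nonneg _ _)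
      _ ≤ a ⋆ b := sup_le h1 h2

lemma chain_add {a b c : A} (h1 : a ≤ b) (h2 : b ≤ c) : a ⋆ c = a ⋆ b + b ⋆ c := by
  have hac : a ≤ c := h1.trans h2
  have hm : a ⋆ b ≤ a ⋆ c := mono1 h1 h2
  have hbeta : b ⋆ c ≤ (a ⋆ b) ⋆ (a ⋆ c) := by
    have h := add_contract a (a ⋆ b) (a ⋆ c)
    rwa [point h1, point hac] at h
  have hE : a ⋆ b + (a ⋆ b) ⋆ (a ⋆ c) = a ⋆ c := point hm
  apply le_antisymm (amul_triangle a c b)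
  calc a ⋆ b + b ⋆ c ≤ a ⋆ b + (a ⋆ b) ⋆ (a ⋆ c) := add_mono le_rfl hbeta
    _ = a ⋆ c := hE

lemma inc_disj (a b : A) : ((a ⊓ b) ⋆ a) ⊓ ((a ⊓ b) ⋆ b) = 0 := by
  rw [inf_comm a b, inc_eq b a, inf_comm b a, inc_eq a b]
  rw [inf_comm (b ⋆ (b ⊔ a)) (a ⋆ (a ⊔ b))]
  exact e_disj a b

lemma add_inf_add (E u v : A) : (E + u) ⊓ (E + v) = E + u ⊓ v := by
  have h1 : E + u ⊓ v ≤ (E + u) ⊓ (E + v) :=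
    le_inf (add_mono le_rfl inf_le_left) (add_mono le_rfl inf_le_right)
  apply le_antisymm _ h1
  have h3 : (E + u ⊓ v) ⋆ ((E + u) ⊓ (E + v)) ≤ (u ⊓ v) ⋆ u :=
    le_trans (mono1 h1 inf_le_left) (add_contract E (u ⊓ v) u)
  have h4 : (E + u ⊓ v) ⋆ ((E + u) ⊓ (E + v)) ≤ (u ⊓ v) ⋆ v :=
    le_trans (mono1 h1 inf_le_right) (add_contract E (u ⊓ v) v)
  have h5 : (E + u ⊓ v) ⋆ ((E + u) ⊓ (E + v)) = 0 :=
    le_antisymm (le_trans (le_inf h3 h4) (inc_disj u v).le) (amul_nonneg _ _)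
  exact le_of_eq ((amul_eq_zero_iff _ _).1 h5).symm

lemma inf_add_le {r p q : A} (hr : 0 ≤ r) (hp : 0 ≤ p) (hq : 0 ≤ q) :
    r ⊓ (p + q) ≤ r ⊓ p + r ⊓ q := by
  have hpq0 : (0 : A) ≤ p + q := by
    calc (0 : A) = 0 + 0 := (add_zero 0).symm
      _ ≤ p + q := add_mono hp hq
  have ht0 : 0 ≤ r ⊓ (p + q) := le_inf hr hpq0
  have htr : r ⊓ (p + q) ≤ r := inf_le_left
  have htpq : r ⊓ (p + q) ≤ p + q := inf_le_right
  have e1 : (r ⊓ (p + q) ⊓ p) ⋆ (r ⊓ (p + q)) = p ⋆ (p ⊔ r ⊓ (p + q)) := by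
    rw [inf_comm (r ⊓ (p + q)) p]
    exact inc_eq p (r ⊓ (p + q))
  have e2 : p ⋆ (p ⊔ r ⊓ (p + q)) ≤ p ⋆ (p + q) :=
    mono1 le_sup_left (sup_le (le_add_right' hq) htpq)
  have e3 : p ⋆ (p + q) ≤ q := star_add_le hq
  have e4 : (r ⊓ (p + q) ⊓ p) ⋆ (r ⊓ (p + q)) ≤ r ⊓ (p + q) := by
    have h := mono2 (le_inf ht0 hp) (inf_le_left : r ⊓ (p + q) ⊓ p ≤ r ⊓ (p + q))
    rwa [zero_star ht0] at h
  have hkey : (r ⊓ (p + q) ⊓ p) ⋆ (r ⊓ (p + q)) ≤ r ⊓ q :=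
    le_inf (e4.trans htr) (by rw [e1]; exact e2.trans e3)
  calc r ⊓ (p + q) = r ⊓ (p + q) ⊓ p + (r ⊓ (p + q) ⊓ p) ⋆ (r ⊓ (p + q)) :=
        (point inf_le_left).symm
    _ ≤ r ⊓ p + r ⊓ q := add_mono (inf_le_inf_right p htr) hkey

lemma inf_sup_distrib' (u v w : A) : u ⊓ (v ⊔ w) = (u ⊓ v) ⊔ (u ⊓ w) := by
  have hJt : (u ⊓ v) ⊔ (u ⊓ w) ≤ u ⊓ (v ⊔ w) :=
    sup_le (le_inf inf_le_left (inf_le_right.trans le_sup_left))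
      (le_inf inf_le_left (inf_le_right.trans le_sup_right))
  apply le_antisymm _ hJt
  have h2 : ((u ⊓ v) ⊔ (u ⊓ w)) ⋆ (u ⊓ (v ⊔ w)) ≤ v ⋆ (v ⊔ w) :=
    le_trans (mono2 le_sup_left hJt) (inf_contract u v (v ⊔ w))
  have h3 : ((u ⊓ v) ⊔ (u ⊓ w)) ⋆ (u ⊓ (v ⊔ w)) ≤ w ⋆ (w ⊔ v) := by
    have h := inf_contract u w (v ⊔ w)
    nth_rewrite 2 [sup_comm v w] at h
    exact le_trans (mono2 le_sup_right hJt) h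
  have h4 : ((u ⊓ v) ⊔ (u ⊓ w)) ⋆ (u ⊓ (v ⊔ w)) = 0 :=
    le_antisymm (le_trans (le_inf h2 h3) (e_disj v w).le) (amul_nonneg _ _)
  exact le_of_eq ((amul_eq_zero_iff _ _).1 h4).symm

lemma meet_star {w u v : A} (h1 : w ≤ u) (h2 : w ≤ v) :
    (w ⋆ u) ⊓ (w ⋆ v) = w ⋆ (u ⊓ v) := by
  have hu := chain_add (le_inf h1 h2) (inf_le_left : u ⊓ v ≤ u)
  have hv := chain_add (le_inf h1 h2) (inf_le_right : u ⊓ v ≤ v)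
  rw [hu, hv, add_inf_add, inc_disj u v, add_zero]

-- helpers continuing in namespace ALStmt3

lemma add_nn {a b : A} (ha : 0 ≤ a) (hb : 0 ≤ b) : (0 : A) ≤ a + b := by
  calc (0 : A) = 0 + 0 := (add_zero 0).symm
    _ ≤ a + b := add_mono ha hb

lemma dz {u v X Y : A} (hu : u ≤ X) (hv : v ≤ Y) (hXY : X ⊓ Y = 0)
    (hu0 : 0 ≤ u) (hv0 : 0 ≤ v) : u ⊓ v = 0 :=
  le_antisymm (le_trans (inf_le_inf hu hv) hXY.le) (le_inf hu0 hv0)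

lemma drop1 {s α β : A} (hs : 0 ≤ s) (hα : 0 ≤ α) (hβ : 0 ≤ β) (h0 : s ⊓ α = 0) :
    s ⊓ (α + β) ≤ s ⊓ β := by
  calc s ⊓ (α + β) ≤ s ⊓ α + s ⊓ β := inf_add_le hs hα hβ
    _ = s ⊓ β := by rw [h0, zero_add]

lemma six_eq {D s α β γ δ : A} (hsD : s ≤ D) (hD : D = (α + β) + (γ + δ))
    (hsα : s ⊓ α = 0) (hsγ : s ⊓ γ = 0) (hbd : (s ⊓ β) ⊓ (s ⊓ δ) = 0)
    (hs0 : 0 ≤ s) (hα0 : 0 ≤ α) (hβ0 : 0 ≤ β) (hγ0 : 0 ≤ γ) (hδ0 : 0 ≤ δ) :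
    s = s ⊓ β + s ⊓ δ := by
  apply le_antisymm
  · calc s = s ⊓ D := (inf_eq_left.2 hsD).symm
      _ = s ⊓ ((α + β) + (γ + δ)) := by rw [hD]
      _ ≤ s ⊓ (α + β) + s ⊓ (γ + δ) :=
          inf_add_le hs0 (add_nn hα0 hβ0) (add_nn hγ0 hδ0)
      _ ≤ (s ⊓ α + s ⊓ β) + (s ⊓ γ + s ⊓ δ) :=
          add_mono (inf_add_le hs0 hα0 hβ0) (inf_add_le hs0 hγ0 hδ0)
      _ = s ⊓ β + s ⊓ δ := by rw [hsα, hsγ, zero_add, zero_add]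
  · have h := disj_add_eq_sup hbd (le_inf hs0 hβ0) (le_inf hs0 hδ0)
    rw [h]
    exact sup_le inf_le_left inf_le_left

lemma canon {s Y Y' : A} (hs : s ≤ Y + Y') (hYY' : Y ⊓ Y' = 0)
    (hY0 : 0 ≤ Y) (hY'0 : 0 ≤ Y') : s = (s ⊓ Y) ⊔ (s ⊓ Y') := by
  have h : Y + Y' = Y ⊔ Y' := disj_add_eq_sup hYY' hY0 hY'0
  rw [← inf_sup_distrib', ← h, inf_eq_left.2 hs]

lemma sum_disj {a1 a2 b1 b2 : A} (h1 : 0 ≤ a1) (h2 : 0 ≤ a2) (h3 : 0 ≤ b1) (h4 : 0 ≤ b2)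
    (z11 : a1 ⊓ b1 = 0) (z12 : a1 ⊓ b2 = 0) (z21 : a2 ⊓ b1 = 0) (z22 : a2 ⊓ b2 = 0) :
    (a1 + a2) ⊓ (b1 + b2) = 0 := by
  apply le_antisymm _ (le_inf (add_nn h1 h2) (add_nn h3 h4))
  have e1 : (a1 + a2) ⊓ b1 ≤ 0 := by
    rw [inf_comm (a1 + a2) b1]
    calc b1 ⊓ (a1 + a2) ≤ b1 ⊓ a1 + b1 ⊓ a2 := inf_add_le h3 h1 h2
      _ = 0 := by rw [inf_comm b1 a1, z11, inf_comm b1 a2, z21, add_zero]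
  have e2 : (a1 + a2) ⊓ b2 ≤ 0 := by
    rw [inf_comm (a1 + a2) b2]
    calc b2 ⊓ (a1 + a2) ≤ b2 ⊓ a1 + b2 ⊓ a2 := inf_add_le h4 h1 h2
      _ = 0 := by rw [inf_comm b2 a1, z12, inf_comm b2 a2, z22, add_zero]
  calc (a1 + a2) ⊓ (b1 + b2) ≤ (a1 + a2) ⊓ b1 + (a1 + a2) ⊓ b2 :=
        inf_add_le (add_nn h1 h2) h3 h4
    _ ≤ 0 + 0 := add_mono e1 e2
    _ = 0 := by simp

lemma absorb {P C e f : A} (h1 : P = C + e) (h2 : P = C + f) (h3 : e ⊓ f = 0)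
    (he : 0 ≤ e) (hf : 0 ≤ f) : P = C := by
  have k1 : C ⋆ P ≤ e := by rw [h1]; exact star_add_le he
  have k2 : C ⋆ P ≤ f := by rw [h2]; exact star_add_le hf
  have k : C ⋆ P = 0 := le_antisymm (le_trans (le_inf k1 k2) h3.le) (amul_nonneg _ _)
  exact ((amul_eq_zero_iff _ _).1 k).symm


lemma main {a b c : A} (h1 : a ⋆ b = b ⋆ c) (h2 : b ⋆ c = c ⋆ a)
    (hm : a ⊓ b ⊓ c = 0) : a ⋆ b = 0 := by
  set p := a ⊓ b with hp_def
  set q := b ⊓ c with hq_def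
  set r := c ⊓ a with hr_def
  -- hm : p ⊓ c = 0
  have hp0 : (0 : A) ≤ p := by rw [← hm]; exact inf_le_left
  have hq0 : (0 : A) ≤ q := by
    rw [← hm]; exact le_inf (inf_le_left.trans inf_le_right) inf_le_right
  have hr0 : (0 : A) ≤ r := by
    rw [← hm]; exact le_inf inf_le_right (inf_le_left.trans inf_le_left)
  have z_pq : p ⊓ q = 0 :=
    le_antisymm (le_trans (inf_le_inf_left p inf_le_right) hm.le) (le_inf hp0 hq0)
  have z_qr : q ⊓ r = 0 := by
    refine le_antisymm (le_trans ?_ hm.le) (le_inf hq0 hr0)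
    exact le_inf (le_inf (inf_le_right.trans inf_le_right) (inf_le_left.trans inf_le_left))
      (inf_le_left.trans inf_le_right)
  have z_rp : r ⊓ p = 0 := by
    refine le_antisymm (le_trans ?_ hm.le) (le_inf hr0 hp0)
    exact le_inf (le_inf (inf_le_right.trans inf_le_left) (inf_le_right.trans inf_le_right))
      (inf_le_left.trans inf_le_left)
  have z_qp : q ⊓ p = 0 := by rw [inf_comm q p]; exact z_pq
  have z_rq : r ⊓ q = 0 := by rw [inf_comm r q]; exact z_qr
  have z_pr : p ⊓ r = 0 := by rw [inf_comm p r]; exact z_rp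
  -- the six directed increments
  set x := a ⋆ (a ⊔ b) with hx_def
  set x' := b ⋆ (b ⊔ a) with hx'_def
  set y := b ⋆ (b ⊔ c) with hy_def
  set y' := c ⋆ (c ⊔ b) with hy'_def
  set z := c ⋆ (c ⊔ a) with hz_def
  set z' := a ⋆ (a ⊔ c) with hz'_def
  have hx0 : (0:A) ≤ x := amul_nonneg _ _
  have hx'0 : (0:A) ≤ x' := amul_nonneg _ _
  have hy0 : (0:A) ≤ y := amul_nonneg _ _
  have hy'0 : (0:A) ≤ y' := amul_nonneg _ _
  have hz0 : (0:A) ≤ z := amul_nonneg _ _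
  have hz'0 : (0:A) ≤ z' := amul_nonneg _ _
  have hx_pb : p ⋆ b = x := inc_eq a b
  have hx'_pa : p ⋆ a = x' := by have h := inc_eq b a; rwa [inf_comm b a] at h
  have hy_qc : q ⋆ c = y := inc_eq b c
  have hy'_qb : q ⋆ b = y' := by have h := inc_eq c b; rwa [inf_comm c b] at h
  have hz_ra : r ⋆ a = z := inc_eq c a
  have hz'_rc : r ⋆ c = z' := by have h := inc_eq a c; rwa [inf_comm a c] at h
  have hxx' : x ⊓ x' = 0 := e_disj a b
  have hyy' : y ⊓ y' = 0 := e_disj b c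
  have hzz' : z ⊓ z' = 0 := e_disj c a
  have hx'x : x' ⊓ x = 0 := by rw [inf_comm x' x]; exact hxx'
  have hy'y : y' ⊓ y = 0 := by rw [inf_comm y' y]; exact hyy'
  have hz'z : z' ⊓ z = 0 := by rw [inf_comm z' z]; exact hzz'
  have hd1 : a ⋆ b = x + x' := star_decomp a b
  have hd2 : a ⋆ b = y + y' := by rw [h1]; exact star_decomp b c
  have hd3 : a ⋆ b = z + z' := by rw [h1, h2]; exact star_decomp c a
  -- the three inner increments
  set ta := (p ⊔ r) ⋆ a with hta_def
  set tb := (p ⊔ q) ⋆ b with htb_def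
  set tc := (q ⊔ r) ⋆ c with htc_def
  have hta0 : (0:A) ≤ ta := amul_nonneg _ _
  have htb0 : (0:A) ≤ tb := amul_nonneg _ _
  have htc0 : (0:A) ≤ tc := amul_nonneg _ _
  have hpq_b : p ⊔ q ≤ b := sup_le inf_le_right inf_le_left
  have hpr_a : p ⊔ r ≤ a := sup_le inf_le_left inf_le_right
  have hqr_c : q ⊔ r ≤ c := sup_le inf_le_right inf_le_left
  have hx_dec : x = q + tb := by
    have hch := chain_add (le_sup_left : p ≤ p ⊔ q) hpq_b
    have hppq : p ⋆ (p ⊔ q) = q := by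
      rw [← inc_eq p q, z_pq]; exact zero_star hq0
    rw [← hx_pb, hch, hppq]
  have hy'_dec : y' = p + tb := by
    have hch := chain_add (le_sup_right : q ≤ p ⊔ q) hpq_b
    have hqpq : q ⋆ (p ⊔ q) = p := by
      rw [sup_comm p q, ← inc_eq q p, z_qp]; exact zero_star hp0
    rw [← hy'_qb, hch, hqpq]
  have hx'_dec : x' = r + ta := by
    have hch := chain_add (le_sup_left : p ≤ p ⊔ r) hpr_a
    have hppr : p ⋆ (p ⊔ r) = r := by
      rw [← inc_eq p r, z_pr]; exact zero_star hr0
    rw [← hx'_pa, hch, hppr]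
  have hz_dec : z = p + ta := by
    have hch := chain_add (le_sup_right : r ≤ p ⊔ r) hpr_a
    have hrpr : r ⋆ (p ⊔ r) = p := by
      rw [sup_comm p r, ← inc_eq r p, z_rp]; exact zero_star hp0
    rw [← hz_ra, hch, hrpr]
  have hy_dec : y = r + tc := by
    have hch := chain_add (le_sup_left : q ≤ q ⊔ r) hqr_c
    have hqqr : q ⋆ (q ⊔ r) = r := by
      rw [← inc_eq q r, z_qr]; exact zero_star hr0
    rw [← hy_qc, hch, hqqr]
  have hz'_dec : z' = q + tc := by
    have hch := chain_add (le_sup_right : r ≤ q ⊔ r) hqr_c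
    have hrqr : r ⋆ (q ⊔ r) = q := by
      rw [sup_comm q r, ← inc_eq r q, z_rq]; exact zero_star hq0
    rw [← hz'_rc, hch, hrqr]
  -- memberships
  have hq_x : q ≤ x := by rw [hx_dec]; exact le_add_right' htb0
  have htb_x : tb ≤ x := by rw [hx_dec, add_comm]; exact le_add_right' hq0
  have hp_y' : p ≤ y' := by rw [hy'_dec]; exact le_add_right' htb0
  have htb_y' : tb ≤ y' := by rw [hy'_dec, add_comm]; exact le_add_right' hp0
  have hr_x' : r ≤ x' := by rw [hx'_dec]; exact le_add_right' hta0
  have hta_x' : ta ≤ x' := by rw [hx'_dec, add_comm]; exact le_add_right' hr0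
  have hp_z : p ≤ z := by rw [hz_dec]; exact le_add_right' hta0
  have hta_z : ta ≤ z := by rw [hz_dec, add_comm]; exact le_add_right' hp0
  have hr_y : r ≤ y := by rw [hy_dec]; exact le_add_right' htc0
  have htc_y : tc ≤ y := by rw [hy_dec, add_comm]; exact le_add_right' hr0
  have hq_z' : q ≤ z' := by rw [hz'_dec]; exact le_add_right' htc0
  have htc_z' : tc ≤ z' := by rw [hz'_dec, add_comm]; exact le_add_right' hq0
  -- zeros among the six pieces
  have z_tab : ta ⊓ tb = 0 := dz hta_x' htb_x hx'x hta0 htb0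
  have z_tba : tb ⊓ ta = 0 := by rw [inf_comm tb ta]; exact z_tab
  have z_tbc : tb ⊓ tc = 0 := dz htb_y' htc_y hy'y htb0 htc0
  have z_tcb : tc ⊓ tb = 0 := by rw [inf_comm tc tb]; exact z_tbc
  have z_tac : ta ⊓ tc = 0 := dz hta_z htc_z' hzz' hta0 htc0
  have z_tca : tc ⊓ ta = 0 := by rw [inf_comm tc ta]; exact z_tac
  -- distances bound memberships
  have hx_d : x ≤ a ⋆ b := by rw [hd1]; exact le_add_right' hx'0
  have hx'_d : x' ≤ a ⋆ b := by rw [hd1, add_comm]; exact le_add_right' hx0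
  have hy_d : y ≤ a ⋆ b := by rw [hd2]; exact le_add_right' hy'0
  have hy'_d : y' ≤ a ⋆ b := by rw [hd2, add_comm]; exact le_add_right' hy0
  have hz_d : z ≤ a ⋆ b := by rw [hd3]; exact le_add_right' hz'0
  have hz'_d : z' ≤ a ⋆ b := by rw [hd3, add_comm]; exact le_add_right' hz0
  have hp_d : p ≤ a ⋆ b := hp_z.trans hz_d
  have hq_d : q ≤ a ⋆ b := hq_x.trans hx_d
  have hr_d : r ≤ a ⋆ b := hr_y.trans hy_d
  have hta_d : ta ≤ a ⋆ b := hta_x'.trans hx'_d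
  have htb_d : tb ≤ a ⋆ b := htb_x.trans hx_d
  have htc_d : tc ≤ a ⋆ b := htc_y.trans hy_d
  -- the six atoms
  set u1 := p ⊓ ta with hu1_def
  set u2 := p ⊓ tb with hu2_def
  set v1 := q ⊓ tb with hv1_def
  set v2 := q ⊓ tc with hv2_def
  set w1 := r ⊓ tc with hw1_def
  set w2 := r ⊓ ta with hw2_def
  have hu10 : (0:A) ≤ u1 := le_inf hp0 hta0
  have hu20 : (0:A) ≤ u2 := le_inf hp0 htb0
  have hv10 : (0:A) ≤ v1 := le_inf hq0 htb0
  have hv20 : (0:A) ≤ v2 := le_inf hq0 htc0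
  have hw10 : (0:A) ≤ w1 := le_inf hr0 htc0
  have hw20 : (0:A) ≤ w2 := le_inf hr0 hta0
  have hD1 : a ⋆ b = (q + tb) + (r + ta) := by rw [hd1, hx_dec, hx'_dec]
  have hD2 : a ⋆ b = (r + tc) + (p + tb) := by rw [hd2, hy_dec, hy'_dec]
  have hD3 : a ⋆ b = (p + ta) + (q + tc) := by rw [hd3, hz_dec, hz'_dec]
  -- six exact decompositions
  have hp_eq : p = u2 + u1 := by
    have hbd : (p ⊓ tb) ⊓ (p ⊓ ta) = 0 := dz inf_le_right inf_le_right z_tba hu20 hu10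
    exact six_eq hp_d hD1 z_pq z_pr hbd hp0 hq0 htb0 hr0 hta0
  have hq_eq : q = v2 + v1 := by
    have hbd : (q ⊓ tc) ⊓ (q ⊓ tb) = 0 := dz inf_le_right inf_le_right z_tcb hv20 hv10
    exact six_eq hq_d hD2 z_qr z_qp hbd hq0 hr0 htc0 hp0 htb0
  have hr_eq : r = w2 + w1 := by
    have hbd : (r ⊓ ta) ⊓ (r ⊓ tc) = 0 := dz inf_le_right inf_le_right z_tac hw20 hw10
    exact six_eq hr_d hD3 z_rp z_rq hbd hr0 hp0 hta0 hq0 htc0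
  have hD2' : a ⋆ b = (tc + r) + (tb + p) := by rw [hD2]; abel
  have hD3' : a ⋆ b = (ta + p) + (tc + q) := by rw [hD3]; abel
  have hD1' : a ⋆ b = (tb + q) + (ta + r) := by rw [hD1]; abel
  have hta_eq : ta = w2 + u1 := by
    have hbd : (ta ⊓ r) ⊓ (ta ⊓ p) = 0 :=
      dz inf_le_right inf_le_right z_rp (le_inf hta0 hr0) (le_inf hta0 hp0)
    have h := six_eq hta_d hD2' z_tac z_tab hbd hta0 htc0 hr0 htb0 hp0
    rwa [inf_comm ta r, inf_comm ta p] at h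
  have htb_eq : tb = u2 + v1 := by
    have hbd : (tb ⊓ p) ⊓ (tb ⊓ q) = 0 :=
      dz inf_le_right inf_le_right z_pq (le_inf htb0 hp0) (le_inf htb0 hq0)
    have h := six_eq htb_d hD3' z_tba z_tbc hbd htb0 hta0 hp0 htc0 hq0
    rwa [inf_comm tb p, inf_comm tb q] at h
  have htc_eq : tc = v2 + w1 := by
    have hbd : (tc ⊓ q) ⊓ (tc ⊓ r) = 0 :=
      dz inf_le_right inf_le_right z_qr (le_inf htc0 hq0) (le_inf htc0 hr0)
    have h := six_eq htc_d hD1' z_tcb z_tca hbd htc0 htb0 hq0 hta0 hr0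
    rwa [inf_comm tc q, inf_comm tc r] at h
  -- cross meets of the distance components
  have zxr : x ⊓ r = 0 := dz le_rfl hr_x' hxx' hx0 hr0
  have zzq : z ⊓ q = 0 := dz le_rfl hq_z' hzz' hz0 hq0
  have zx'tb : x' ⊓ tb = 0 := dz le_rfl htb_x hx'x hx'0 htb0
  have zz'ta : z' ⊓ ta = 0 := dz le_rfl hta_z hz'z hz'0 hta0
  have hxy : x ⊓ y = v2 := by
    apply le_antisymm
    · calc x ⊓ y = x ⊓ (r + tc) := by rw [hy_dec]
        _ ≤ x ⊓ tc := drop1 hx0 hr0 htc0 zxr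
        _ = tc ⊓ (q + tb) := by rw [inf_comm x tc, hx_dec]
        _ = tc ⊓ (tb + q) := by rw [add_comm q tb]
        _ ≤ tc ⊓ q := drop1 htc0 htb0 hq0 z_tcb
        _ = v2 := by rw [inf_comm tc q]
    · exact le_inf (inf_le_left.trans hq_x) (inf_le_right.trans htc_y)
  have hxy' : x ⊓ y' = tb := by
    rw [hx_dec, hy'_dec, add_comm q tb, add_comm p tb, add_inf_add, z_qp, add_zero]
  have hx'y : x' ⊓ y = r := by
    rw [hx'_dec, hy_dec, add_inf_add, z_tac, add_zero]
  have hx'y' : x' ⊓ y' = u1 := by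
    apply le_antisymm
    · calc x' ⊓ y' = x' ⊓ (p + tb) := by rw [hy'_dec]
        _ = x' ⊓ (tb + p) := by rw [add_comm p tb]
        _ ≤ x' ⊓ p := drop1 hx'0 htb0 hp0 zx'tb
        _ = p ⊓ (r + ta) := by rw [inf_comm x' p, hx'_dec]
        _ ≤ p ⊓ ta := drop1 hp0 hr0 hta0 z_pr
    · exact le_inf (inf_le_right.trans hta_x') (inf_le_left.trans hp_y')
  have hzx : z ⊓ x = u2 := by
    apply le_antisymm
    · calc z ⊓ x = z ⊓ (q + tb) := by rw [hx_dec]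
        _ ≤ z ⊓ tb := drop1 hz0 hq0 htb0 zzq
        _ = tb ⊓ (p + ta) := by rw [inf_comm z tb, hz_dec]
        _ = tb ⊓ (ta + p) := by rw [add_comm p ta]
        _ ≤ tb ⊓ p := drop1 htb0 hta0 hp0 z_tba
        _ = u2 := by rw [inf_comm tb p]
    · exact le_inf (inf_le_left.trans hp_z) (inf_le_right.trans htb_x)
  have hzx' : z ⊓ x' = ta := by
    rw [hz_dec, hx'_dec, add_comm p ta, add_comm r ta, add_inf_add, z_pr, add_zero]
  have hz'x : z' ⊓ x = q := by
    rw [hz'_dec, hx_dec, add_inf_add, z_tcb, add_zero]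
  have hz'x' : z' ⊓ x' = w1 := by
    apply le_antisymm
    · calc z' ⊓ x' = z' ⊓ (r + ta) := by rw [hx'_dec]
        _ = z' ⊓ (ta + r) := by rw [add_comm r ta]
        _ ≤ z' ⊓ r := drop1 hz'0 hta0 hr0 zz'ta
        _ = r ⊓ (q + tc) := by rw [inf_comm z' r, hz'_dec]
        _ ≤ r ⊓ tc := drop1 hr0 hq0 htc0 z_rq
    · exact le_inf (inf_le_right.trans htc_z') (inf_le_left.trans hr_x')
  -- canonical forms
  have hx_yd : x ≤ y + y' := hd2 ▸ hx_d
  have hy_xd : y ≤ x + x' := hd1 ▸ hy_d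
  have hy'_xd : y' ≤ x + x' := hd1 ▸ hy'_d
  have hx'_yd : x' ≤ y + y' := hd2 ▸ hx'_d
  have hz_xd : z ≤ x + x' := hd1 ▸ hz_d
  have hz'_xd : z' ≤ x + x' := hd1 ▸ hz'_d
  have hx_can : x = v2 + tb := by
    have h := canon hx_yd hyy' hy0 hy'0
    rw [hxy, hxy'] at h
    have hdj : v2 ⊓ tb = 0 := dz inf_le_right le_rfl z_tcb hv20 htb0
    rw [h, ← disj_add_eq_sup hdj hv20 htb0]
  have hy'_can : y' = tb + u1 := by
    have h := canon hy'_xd hxx' hx0 hx'0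
    rw [inf_comm y' x, hxy', inf_comm y' x', hx'y'] at h
    have hdj : tb ⊓ u1 = 0 := dz le_rfl inf_le_right z_tba htb0 hu10
    rw [h, ← disj_add_eq_sup hdj htb0 hu10]
  have hx'_can : x' = r + u1 := by
    have h := canon hx'_yd hyy' hy0 hy'0
    rw [inf_comm x' y, inf_comm y x', hx'y, hx'y'] at h
    have hdj : r ⊓ u1 = 0 := dz le_rfl inf_le_left z_rp hr0 hu10
    rw [h, ← disj_add_eq_sup hdj hr0 hu10]
  have hz_can : z = u2 + ta := by
    have h := canon hz_xd hxx' hx0 hx'0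
    rw [hzx, hzx'] at h
    have hdj : u2 ⊓ ta = 0 := dz inf_le_right le_rfl z_tba hu20 hta0
    rw [h, ← disj_add_eq_sup hdj hu20 hta0]
  have hy_can : y = v2 + r := by
    have h := canon hy_xd hxx' hx0 hx'0
    rw [inf_comm y x, hxy, inf_comm y x', hx'y] at h
    have hdj : v2 ⊓ r = 0 := dz inf_le_left le_rfl z_qr hv20 hr0
    rw [h, ← disj_add_eq_sup hdj hv20 hr0]
  have hz'_can : z' = q + w1 := by
    have h := canon hz'_xd hxx' hx0 hx'0
    rw [hz'x, hz'x'] at h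
    have hdj : q ⊓ w1 = 0 := dz le_rfl inf_le_left z_qr hq0 hw10
    rw [h, ← disj_add_eq_sup hdj hq0 hw10]
  -- point decompositions
  have hb_px : b = p + x := by rw [← hx_pb]; exact (point inf_le_right).symm
  have hb_qy' : b = q + y' := by rw [← hy'_qb]; exact (point inf_le_left).symm
  have ha_px' : a = p + x' := by rw [← hx'_pa]; exact (point inf_le_left).symm
  have ha_rz : a = r + z := by rw [← hz_ra]; exact (point inf_le_right).symm
  have hc_qy : c = q + y := by rw [← hy_qc]; exact (point inf_le_right).symm
  have hc_rz' : c = r + z' := by rw [← hz'_rc]; exact (point inf_le_left).symm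
  have hb1 : b = (u1 + u2 + v1 + v2) + u2 := by
    rw [hb_px, hp_eq, hx_can, htb_eq]; abel
  have hb2 : b = (u1 + u2 + v1 + v2) + v1 := by
    rw [hb_qy', hq_eq, hy'_can, htb_eq]; abel
  have ha1 : a = (u1 + u2 + w1 + w2) + u1 := by
    rw [ha_px', hp_eq, hx'_can, hr_eq]; abel
  have ha2 : a = (u1 + u2 + w1 + w2) + w2 := by
    rw [ha_rz, hr_eq, hz_can, hta_eq]; abel
  have hc1 : c = (v1 + v2 + w1 + w2) + v2 := by
    rw [hc_qy, hq_eq, hy_can, hr_eq]; abel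
  have hc2 : c = (v1 + v2 + w1 + w2) + w1 := by
    rw [hc_rz', hr_eq, hz'_can, hq_eq]; abel
  -- absorption
  have zu2v1 : u2 ⊓ v1 = 0 := dz inf_le_left inf_le_left z_pq hu20 hv10
  have zu1w2 : u1 ⊓ w2 = 0 := dz inf_le_left inf_le_left z_pr hu10 hw20
  have zv2w1 : v2 ⊓ w1 = 0 := dz inf_le_left inf_le_left z_qr hv20 hw10
  have hb_c : b = u1 + u2 + v1 + v2 := absorb hb1 hb2 zu2v1 hu20 hv10
  have ha_c : a = u1 + u2 + w1 + w2 := absorb ha1 ha2 zu1w2 hu10 hw20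
  have hc_c : c = v1 + v2 + w1 + w2 := absorb hc1 hc2 zv2w1 hv20 hw10
  -- remaining pairwise zeros
  have zw1v1 : w1 ⊓ v1 = 0 := dz inf_le_left inf_le_left z_rq hw10 hv10
  have zw1v2 : w1 ⊓ v2 = 0 := dz inf_le_left inf_le_left z_rq hw10 hv20
  have zw2v1 : w2 ⊓ v1 = 0 := dz inf_le_left inf_le_left z_rq hw20 hv10
  have zw2v2 : w2 ⊓ v2 = 0 := dz inf_le_right inf_le_right z_tac hw20 hv20
  have zu1w1 : u1 ⊓ w1 = 0 := dz inf_le_left inf_le_left z_pr hu10 hw10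
  have zu2w1 : u2 ⊓ w1 = 0 := dz inf_le_left inf_le_left z_pr hu20 hw10
  have zu2w2 : u2 ⊓ w2 = 0 := dz inf_le_left inf_le_left z_pr hu20 hw20
  have zv1u1 : v1 ⊓ u1 = 0 := dz inf_le_left inf_le_left z_qp hv10 hu10
  have zv1u2 : v1 ⊓ u2 = 0 := dz inf_le_left inf_le_left z_qp hv10 hu20
  have zv2u1 : v2 ⊓ u1 = 0 := dz inf_le_left inf_le_left z_qp hv20 hu10
  have zv2u2 : v2 ⊓ u2 = 0 := dz inf_le_left inf_le_left z_qp hv20 hu20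
  have zu1v1 : u1 ⊓ v1 = 0 := dz inf_le_left inf_le_left z_pq hu10 hv10
  have zu1v2 : u1 ⊓ v2 = 0 := dz inf_le_left inf_le_left z_pq hu10 hv20
  have zu2v2 : u2 ⊓ v2 = 0 := dz inf_le_left inf_le_left z_pq hu20 hv20
  have zv1w1 : v1 ⊓ w1 = 0 := dz inf_le_left inf_le_left z_qr hv10 hw10
  have zv1w2 : v1 ⊓ w2 = 0 := dz inf_le_left inf_le_left z_qr hv10 hw20
  have zv2w2 : v2 ⊓ w2 = 0 := dz inf_le_right inf_le_right z_tca hv20 hw20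
  have zw1u1 : w1 ⊓ u1 = 0 := dz inf_le_left inf_le_left z_rp hw10 hu10
  have zw1u2 : w1 ⊓ u2 = 0 := dz inf_le_left inf_le_left z_rp hw10 hu20
  have zw2u1 : w2 ⊓ u1 = 0 := dz inf_le_left inf_le_left z_rp hw20 hu10
  have zw2u2 : w2 ⊓ u2 = 0 := dz inf_le_left inf_le_left z_rp hw20 hu20
  -- the three contraction bounds
  have K1 : a ⋆ b ≤ (w1 + w2) + (v1 + v2) := by
    have ea : a = (u1 + u2) + (w1 + w2) := by rw [ha_c]; abel
    have eb : b = (u1 + u2) + (v1 + v2) := by rw [hb_c]; abel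
    have hdj : (w1 + w2) ⊓ (v1 + v2) = 0 :=
      sum_disj hw10 hw20 hv10 hv20 zw1v1 zw1v2 zw2v1 zw2v2
    calc a ⋆ b = ((u1 + u2) + (w1 + w2)) ⋆ ((u1 + u2) + (v1 + v2)) := by rw [← ea, ← eb]
      _ ≤ (w1 + w2) ⋆ (v1 + v2) := add_contract _ _ _
      _ = (w1 + w2) + (v1 + v2) := disj_star hdj (add_nn hw10 hw20) (add_nn hv10 hv20)
  have K2 : a ⋆ b ≤ (u1 + u2) + (w1 + w2) := by
    have eb : b = (v1 + v2) + (u1 + u2) := by rw [hb_c]; abel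
    have ec : c = (v1 + v2) + (w1 + w2) := by rw [hc_c]; abel
    have hdj : (u1 + u2) ⊓ (w1 + w2) = 0 :=
      sum_disj hu10 hu20 hw10 hw20 zu1w1 zu1w2 zu2w1 zu2w2
    calc a ⋆ b = b ⋆ c := h1
      _ = ((v1 + v2) + (u1 + u2)) ⋆ ((v1 + v2) + (w1 + w2)) := by rw [← eb, ← ec]
      _ ≤ (u1 + u2) ⋆ (w1 + w2) := add_contract _ _ _
      _ = (u1 + u2) + (w1 + w2) := disj_star hdj (add_nn hu10 hu20) (add_nn hw10 hw20)
  have K3 : a ⋆ b ≤ (v1 + v2) + (u1 + u2) := by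
    have ec : c = (w1 + w2) + (v1 + v2) := by rw [hc_c]; abel
    have ea : a = (w1 + w2) + (u1 + u2) := by rw [ha_c]; abel
    have hdj : (v1 + v2) ⊓ (u1 + u2) = 0 :=
      sum_disj hv10 hv20 hu10 hu20 zv1u1 zv1u2 zv2u1 zv2u2
    calc a ⋆ b = c ⋆ a := h1.trans h2
      _ = ((w1 + w2) + (v1 + v2)) ⋆ ((w1 + w2) + (u1 + u2)) := by rw [← ec, ← ea]
      _ ≤ (v1 + v2) ⋆ (u1 + u2) := add_contract _ _ _
      _ = (v1 + v2) + (u1 + u2) := disj_star hdj (add_nn hv10 hv20) (add_nn hu10 hu20)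
  -- kill all six atoms
  have kill : ∀ {s e1 e2 e3 e4 : A}, s ≤ a ⋆ b → a ⋆ b ≤ (e1 + e2) + (e3 + e4) →
      s ⊓ e1 = 0 → s ⊓ e2 = 0 → s ⊓ e3 = 0 → s ⊓ e4 = 0 → 0 ≤ s →
      0 ≤ e1 → 0 ≤ e2 → 0 ≤ e3 → 0 ≤ e4 → s = 0 := by
    intro s e1 e2 e3 e4 hsd hK zz1 zz2 zz3 zz4 hs0 he1 he2 he3 he4
    apply le_antisymm _ hs0
    calc s = s ⊓ (a ⋆ b) := (inf_eq_left.2 hsd).symm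
      _ ≤ s ⊓ ((e1 + e2) + (e3 + e4)) := inf_le_inf_left s hK
      _ ≤ s ⊓ (e1 + e2) + s ⊓ (e3 + e4) :=
          inf_add_le hs0 (add_nn he1 he2) (add_nn he3 he4)
      _ ≤ (s ⊓ e1 + s ⊓ e2) + (s ⊓ e3 + s ⊓ e4) :=
          add_mono (inf_add_le hs0 he1 he2) (inf_add_le hs0 he3 he4)
      _ = 0 := by rw [zz1, zz2, zz3, zz4]; simp
  have hu1_d : u1 ≤ a ⋆ b := (inf_le_left.trans hp_d)
  have hu2_d : u2 ≤ a ⋆ b := (inf_le_left.trans hp_d)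
  have hv1_d : v1 ≤ a ⋆ b := (inf_le_left.trans hq_d)
  have hv2_d : v2 ≤ a ⋆ b := (inf_le_left.trans hq_d)
  have hw1_d : w1 ≤ a ⋆ b := (inf_le_left.trans hr_d)
  have hw2_d : w2 ≤ a ⋆ b := (inf_le_left.trans hr_d)
  have hu1z : u1 = 0 := kill hu1_d K1 zu1w1 zu1w2 zu1v1 zu1v2 hu10 hw10 hw20 hv10 hv20
  have hu2z : u2 = 0 := kill hu2_d K1 zu2w1 zu2w2 zu2v1 zu2v2 hu20 hw10 hw20 hv10 hv20
  have hv1z : v1 = 0 := kill hv1_d K2 zv1u1 zv1u2 zv1w1 zv1w2 hv10 hu10 hu20 hw10 hw20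
  have hv2z : v2 = 0 := kill hv2_d K2 zv2u1 zv2u2 zv2w1 zv2w2 hv20 hu10 hu20 hw10 hw20
  have hw1z : w1 = 0 := kill hw1_d K3 zw1v1 zw1v2 zw1u1 zw1u2 hw10 hv10 hv20 hu10 hu20
  have hw2z : w2 = 0 := kill hw2_d K3 zw2v1 zw2v2 zw2u1 zw2u2 hw20 hv10 hv20 hu10 hu20
  apply le_antisymm _ (amul_nonneg a b)
  calc a ⋆ b ≤ (w1 + w2) + (v1 + v2) := K1
    _ = 0 := by rw [hw1z, hw2z, hv1z, hv2z]; simp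


end ALStmt3

theorem stmt3 {A : Type*} [ALMonoid A] (a b c : A)
    (h1 : a ⋆ b = b ⋆ c) (h2 : b ⋆ c = c ⋆ a) :
    a = b ∧ b = c := by
  have hma : a ⊓ b ⊓ c ≤ a := inf_le_left.trans inf_le_left
  have hmb : a ⊓ b ⊓ c ≤ b := inf_le_left.trans inf_le_right
  have hmc : a ⊓ b ⊓ c ≤ c := inf_le_right
  set m := a ⊓ b ⊓ c with hm_def
  have hab : (m ⋆ a) ⋆ (m ⋆ b) = a ⋆ b := by
    apply le_antisymm (amul_contract m a b)
    have h := add_contract m (m ⋆ a) (m ⋆ b)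
    rwa [ALStmt3.point hma, ALStmt3.point hmb] at h
  have hbc : (m ⋆ b) ⋆ (m ⋆ c) = b ⋆ c := by
    apply le_antisymm (amul_contract m b c)
    have h := add_contract m (m ⋆ b) (m ⋆ c)
    rwa [ALStmt3.point hmb, ALStmt3.point hmc] at h
  have hca : (m ⋆ c) ⋆ (m ⋆ a) = c ⋆ a := by
    apply le_antisymm (amul_contract m c a)
    have h := add_contract m (m ⋆ c) (m ⋆ a)
    rwa [ALStmt3.point hmc, ALStmt3.point hma] at h
  have hmeet : (m ⋆ a) ⊓ (m ⋆ b) ⊓ (m ⋆ c) = 0 := by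
    rw [ALStmt3.meet_star hma hmb,
      ALStmt3.meet_star (inf_le_left : m ≤ a ⊓ b) hmc]
    exact ALStmt3.star_self m
  have key : (m ⋆ a) ⋆ (m ⋆ b) = 0 := by
    apply ALStmt3.main ?_ ?_ hmeet
    · rw [hab, hbc]; exact h1
    · rw [hbc, hca]; exact h2
  have hab0 : a ⋆ b = 0 := by rw [← hab, key]
  have hbc0 : b ⋆ c = 0 := by rw [← h1, hab0]
  exact ⟨(amul_eq_zero_iff a b).1 hab0, (amul_eq_zero_iff b c).1 hbc0⟩
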